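/- Let Λ = KQ be the path algebra of a finite acyclic quiver Q over an algebraically closed field K, and let B be a brick that is not exceptional (i.e., Ext^1_Λ(B,B) ≠ 0). Then there exists a finite dimensional Λ-module X with Hom_Λ(B,X) = 0 whose dimension vector is a positive integer multiple of the dimension vector of B. -/

import Mathlib

/-!
Common setup: representation schemes of a finite dimensional algebra `Λ = KQ/I`
(`Q` a finite quiver, `I` an admissible ideal), following the paper.
-/

namespace RepScheme

variable (K : Type) [Field K]
variable (Q0 Q1 : Type) [Fintype Q0] [Fintype Q1]
variable (s t : Q1 → Q0)

/-- The Zariski topology on the affine space `σ → K`: generated by the complements of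
hypersurfaces; its closed sets are exactly the common zero loci of sets of polynomials. -/
def zariskiTopology (σ : Type) : TopologicalSpace (σ → K) :=
  TopologicalSpace.generateFrom
    {U | ∃ p : MvPolynomial σ K, U = {x | MvPolynomial.eval x p ≠ 0}}

/-- The representation space `rep(Q,d)` of the quiver `Q` for the dimension vector `d`. -/
def Rep (d : Q0 → ℕ) : Type :=
  ∀ a : Q1, Matrix (Fin (d (t a))) (Fin (d (s a))) K

/-- `rep(Q,d)` carries the Zariski topology, transported from its affine coordinates. -/
instance (d : Q0 → ℕ) : TopologicalSpace (Rep K Q0 Q1 s t d) :=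
  TopologicalSpace.induced
    (fun M (x : Σ a : Q1, Fin (d (t a)) × Fin (d (s a))) => M x.1 x.2.1 x.2.2)
    (zariskiTopology K _)

/-- Paths in the quiver `Q`. -/
inductive QPath : Q0 → Q0 → Type where
  | nil (i : Q0) : QPath i i
  | cons {i j : Q0} (p : QPath i j) (a : Q1) (ha : s a = j) : QPath i (t a)

/-- The length of a path. -/
def QPath.length : ∀ {i j : Q0}, QPath Q0 Q1 s t i j → ℕ
  | _, _, .nil _ => 0
  | _, _, .cons p _ _ => QPath.length p + 1

/-- Evaluation of a path in a point of `rep(Q,d)` (composition of the corresponding matrices). -/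
def evalPath {d : Q0 → ℕ} (M : Rep K Q0 Q1 s t d) :
    ∀ {i j : Q0}, QPath Q0 Q1 s t i j → Matrix (Fin (d j)) (Fin (d i)) K
  | _, _, .nil _ => 1
  | _, _, .cons p a ha =>
      M a * (Matrix.reindex (finCongr (congrArg d ha)).symm (Equiv.refl _) (evalPath M p))

/-- Hom space `Hom_Λ(M, N)` between two representation points, as a `K`-subspace of the space
of tuples of matrices. -/
def RepHom {d c : Q0 → ℕ} (M : Rep K Q0 Q1 s t d) (N : Rep K Q0 Q1 s t c) :
    Submodule K (∀ i : Q0, Matrix (Fin (c i)) (Fin (d i)) K) where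
  carrier := {f | ∀ a : Q1, f (t a) * M a = N a * f (s a)}
  add_mem' := fun hf hg => by
    intro a
    simp only [Pi.add_apply, Matrix.add_mul, Matrix.mul_add]
    rw [hf a, hg a]
  zero_mem' := by intro a; simp
  smul_mem' := fun c f hf => by
    intro a
    simp only [Pi.smul_apply, Matrix.smul_mul, Matrix.mul_smul]
    rw [hf a]

/-- A representation point is a brick if its endomorphism ring is `K`,
i.e. one-dimensional over `K`. -/
def IsBrick {d : Q0 → ℕ} (M : Rep K Q0 Q1 s t d) : Prop :=
  Module.finrank K (RepHom K Q0 Q1 s t M M) = 1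

/-! ### Path algebras `Λ = KQ` of finite acyclic quivers -/

/-- The quiver `Q` is acyclic: every cycle is trivial. -/
def IsAcyclic : Prop :=
  ∀ (i : Q0) (p : QPath Q0 Q1 s t i i), p = QPath.nil i

/-- A finite dimensional module over the path algebra `Λ = KQ`, regarded as a point of
`rep(Q,d)` for its dimension vector `d`. -/
def ModPtP : Type := Σ d : Q0 → ℕ, Rep K Q0 Q1 s t d

/-- A set of `KQ`-modules is a semibrick if its elements are bricks and there are no
nonzero homomorphisms between distinct elements. -/
def IsSemibrickP (S : Set (ModPtP K Q0 Q1 s t)) : Prop :=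
  (∀ B ∈ S, IsBrick K Q0 Q1 s t B.2) ∧
  ∀ B ∈ S, ∀ B' ∈ S, B ≠ B' → RepHom K Q0 Q1 s t B.2 B'.2 = ⊥

/-- For representations of the (hereditary) path algebra `KQ`, the self-extension space
`Ext¹(M,N)` is the cokernel of this map; in particular `Ext¹(M,N) = 0` iff it is surjective. -/
def extMap {d c : Q0 → ℕ} (M : Rep K Q0 Q1 s t d) (N : Rep K Q0 Q1 s t c) :
    (∀ i : Q0, Matrix (Fin (c i)) (Fin (d i)) K) →ₗ[K]
      (∀ a : Q1, Matrix (Fin (c (t a))) (Fin (d (s a))) K) where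
  toFun f := fun a => f (t a) * M a - N a * f (s a)
  map_add' f g := by
    funext a
    simp only [Pi.add_apply, Matrix.add_mul, Matrix.mul_add]
    abel
  map_smul' k f := by
    funext a
    simp only [Pi.smul_apply, Matrix.smul_mul, Matrix.mul_smul, smul_sub, RingHom.id_apply]

/-- A brick `B` over the path algebra is exceptional if `Ext¹(B,B) = 0`. -/
def IsExceptional {d : Q0 → ℕ} (B : Rep K Q0 Q1 s t d) : Prop :=
  IsBrick K Q0 Q1 s t B ∧ Function.Surjective (extMap K Q0 Q1 s t B B)

end RepScheme

/-!
A homomorphism `B → B + r • E` is a kernel vector of `extMap B B - r • arrowMul E`. When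
`End B = K` and `E` is not in the image of `extMap B B` (i.e. represents a nonzero class of
`Ext¹(B,B)`), this pencil has no kernel even over power series: the constant term of a kernel
vector is an endomorphism of `B`, hence a scalar `μ`, and `μ ≠ 0` would put `μ • E` in the image.
A pencil `A₀ - X • A₁` that is injective over `K[X]` has a left inverse over `K(X)`; clearing
denominators gives `H * (A₀ - X • A₁) = q • 1` with `q ≠ 0`, so `A₀ - r • A₁` is injective as soon
as `q(r) ≠ 0`, which happens for some `r` since `K` is infinite.
-/

namespace LinearMap

variable {R V W : Type*} [Semiring R] [AddCommMonoid V] [Module R V] [AddCommMonoid W]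
  [Module R W]

/-- The pencil `A₀ - X • A₁` is injective on `V⟦X⟧`: `f` is the coefficient sequence of a
power series in its kernel. -/
def PencilInjective (A₀ A₁ : V →ₗ[R] W) : Prop :=
  ∀ f : ℕ → V, A₀ (f 0) = 0 → (∀ k, A₀ (f (k + 1)) = A₁ (f k)) → f = 0

end LinearMap

namespace Matrix

section Domain

variable {m n R : Type*} [Fintype n] [CommRing R] [IsDomain R]

theorem mulVec_injective_of_mul_eq_smul_one [Fintype m] [DecidableEq n] {G : Matrix n m R}
    {P : Matrix m n R} {u : R} (hu : u ≠ 0) (hGP : G * P = u • 1) :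
    Function.Injective P.mulVec := by
  intro v w hvw
  have hG := congrArg (G *ᵥ ·) hvw
  simp only [mulVec_mulVec, hGP, smul_mulVec, one_mulVec] at hG
  exact smul_right_injective (n → R) hu hG

theorem mulVec_map_algebraMap_injective {F : Type*} [Field F] [Algebra R F] [IsFractionRing R F]
    {P : Matrix m n R} (hP : Function.Injective P.mulVec) :
    Function.Injective (P.map (algebraMap R F)).mulVec := by
  refine (injective_iff_map_eq_zero (P.map (algebraMap R F)).mulVecLin).2 fun v hv => ?_
  change P.map (algebraMap R F) *ᵥ v = 0 at hv
  obtain ⟨b, hb⟩ := IsLocalization.exist_integer_multiples_of_finite (nonZeroDivisors R) v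
  choose w hw using hb
  have hw' : algebraMap R F ∘ w = (b : R) • v := funext hw
  have hPw : P *ᵥ w = 0 := by
    funext i
    apply IsFractionRing.injective R F
    rw [RingHom.map_mulVec, hw', mulVec_smul]
    simp [hv]
  have hbv : algebraMap R F b • v = 0 := by
    rw [algebraMap_smul, ← hw', hP (hPw.trans (mulVec_zero P).symm)]
    simp
  exact (smul_eq_zero.mp hbv).resolve_left
    (IsFractionRing.to_map_ne_zero_of_mem_nonZeroDivisors b.2)

theorem exists_mul_eq_smul_one_of_mulVec_injective [Fintype m] [DecidableEq n]
    {P : Matrix m n R} (hP : Function.Injective P.mulVec) :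
    ∃ q : R, q ≠ 0 ∧ ∃ H : Matrix n m R, H * P = q • 1 := by
  classical
  let F := FractionRing R
  let P' := P.map (algebraMap R F)
  obtain ⟨g, hg⟩ := LinearMap.exists_leftInverse_of_injective P'.mulVecLin
    (LinearMap.ker_eq_bot.2 (mulVec_map_algebraMap_injective hP))
  let G := LinearMap.toMatrix' g
  have hGP : G * P' = 1 := by
    rw [← LinearMap.toMatrix'_toLin' P', ← LinearMap.toMatrix'_comp, toLin'_apply']
    simp [hg]
  obtain ⟨b, hb⟩ := IsLocalization.exist_integer_multiples_of_finite (nonZeroDivisors R)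
    fun p : n × m => G p.1 p.2
  choose H hH using hb
  refine ⟨b, nonZeroDivisors.ne_zero b.2, of fun i j => H (i, j), ?_⟩
  apply map_injective (IsFractionRing.injective R F)
  have hHG : (of fun i j => H (i, j)).map (algebraMap R F) = (b : R) • G := by
    ext i j
    exact hH (i, j)
  change ((of fun i j => H (i, j)) * P).map _ = ((b : R) • (1 : Matrix n n R)).map _
  rw [Matrix.map_mul, hHG, smul_mul, hGP, map_smul', Matrix.map_one] <;> simp

end Domain

section Polynomial

open Polynomial

variable {m n R : Type*} [Fintype n] [CommRing R]

theorem coeff_mulVec_map_C {A : Matrix m n R} (v : n → R[X]) (i : m) (k : ℕ) :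
    ((A.map C *ᵥ v) i).coeff k = (A *ᵥ fun j => (v j).coeff k) i := by
  simp [mulVec, dotProduct, coeff_C_mul]

variable [Fintype m] [IsDomain R] [Infinite R]

theorem exists_mulVec_map_eval_injective {P : Matrix m n R[X]}
    (hP : Function.Injective P.mulVec) : ∃ c : R, Function.Injective (P.map (eval c)).mulVec := by
  classical
  obtain ⟨q, hq, H, hHP⟩ := exists_mul_eq_smul_one_of_mulVec_injective hP
  obtain ⟨c, hc⟩ : ∃ c, q.eval c ≠ 0 := by
    by_contra! h
    exact hq (zero_of_eval_zero q h)
  refine ⟨c, mulVec_injective_of_mul_eq_smul_one hc (G := H.map (eval c)) ?_⟩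
  have hmap : (H * P).map (evalRingHom c) = H.map (eval c) * P.map (eval c) :=
    Matrix.map_mul (f := evalRingHom c)
  rw [← hmap, hHP]
  ext i j
  by_cases hij : i = j <;> simp [hij]

theorem exists_mulVec_sub_smul_injective {A B : Matrix m n R}
    (hAB : A.mulVecLin.PencilInjective B.mulVecLin) :
    ∃ c : R, Function.Injective (A - c • B).mulVec := by
  let P : Matrix m n R[X] := A.map C - (X : R[X]) • B.map C
  have hP : Function.Injective P.mulVec := by
    refine (injective_iff_map_eq_zero P.mulVecLin).2 fun v hv => ?_
    have hv : A.map C *ᵥ v = (X : R[X]) • (B.map C *ᵥ v) := by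
      rw [← smul_mulVec, ← sub_eq_zero, ← sub_mulVec]
      exact hv
    have hcoeff (i : m) (k : ℕ) := congrArg (coeff · k) (congrFun hv i)
    have hw := hAB (fun k j => (v j).coeff k) ?_ ?_
    · ext j k
      exact congrFun (congrFun hw k) j
    · funext i
      simpa [coeff_mulVec_map_C] using hcoeff i 0
    · intro k
      funext i
      simpa [coeff_mulVec_map_C, coeff_X_mul] using hcoeff i (k + 1)
  obtain ⟨c, hc⟩ := exists_mulVec_map_eval_injective hP
  refine ⟨c, ?_⟩
  convert hc using 2
  ext i j
  simp only [P, map_apply, sub_apply, smul_apply, smul_eq_mul, eval_sub, eval_mul, eval_X, eval_C]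

end Polynomial

end Matrix

namespace LinearMap

open Matrix

variable {K V W : Type*} [Field K] [Infinite K] [AddCommGroup V] [Module K V]
  [FiniteDimensional K V] [AddCommGroup W] [Module K W] [FiniteDimensional K W]

theorem PencilInjective.exists_sub_smul_injective {A₀ A₁ : V →ₗ[K] W}
    (h : A₀.PencilInjective A₁) : ∃ c : K, Function.Injective (A₀ - c • A₁) := by
  classical
  let eV := (Module.finBasis K V).equivFun
  let eW := (Module.finBasis K W).equivFun
  let A := toMatrix' (eW.toLinearMap ∘ₗ A₀ ∘ₗ eV.symm.toLinearMap)
  let B := toMatrix' (eW.toLinearMap ∘ₗ A₁ ∘ₗ eV.symm.toLinearMap)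
  have hA (x) : A *ᵥ x = eW (A₀ (eV.symm x)) := toMatrix'_mulVec _ x
  have hB (x) : B *ᵥ x = eW (A₁ (eV.symm x)) := toMatrix'_mulVec _ x
  have hAB : A.mulVecLin.PencilInjective B.mulVecLin := by
    intro w h0 hs
    have hf := h (eV.symm ∘ w) (by simpa [hA] using h0) (fun k => by simpa [hA, hB] using hs k)
    funext k
    simpa using congrArg eV (congrFun hf k)
  obtain ⟨c, hc⟩ := exists_mulVec_sub_smul_injective hAB
  refine ⟨c, fun v v' hvv' => eV.injective (hc ?_)⟩
  simpa [sub_mulVec, smul_mulVec, hA, hB] using congrArg eW hvv'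

end LinearMap

namespace RepScheme

variable {K : Type} [Field K] {Q0 Q1 : Type} {s t : Q1 → Q0} {d c : Q0 → ℕ}

def arrowMul (E : ∀ a : Q1, Matrix (Fin (c (t a))) (Fin (c (s a))) K) :
    (∀ i : Q0, Matrix (Fin (c i)) (Fin (d i)) K) →ₗ[K]
      (∀ a : Q1, Matrix (Fin (c (t a))) (Fin (d (s a))) K) where
  toFun f a := E a * f (s a)
  map_add' f g := by
    funext a
    simp [Matrix.mul_add]
  map_smul' r f := by
    funext a
    simp [Matrix.mul_smul]

@[simp]
theorem arrowMul_one (E : ∀ a : Q1, Matrix (Fin (d (t a))) (Fin (d (s a))) K) :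
    arrowMul E 1 = E :=
  funext fun a => Matrix.mul_one (E a)

theorem repHom_eq_ker_extMap (M : Rep K Q0 Q1 s t d) (N : Rep K Q0 Q1 s t c) :
    RepHom K Q0 Q1 s t M N = LinearMap.ker (extMap K Q0 Q1 s t M N) := by
  ext f
  simp [RepHom, extMap, funext_iff, sub_eq_zero]

theorem extMap_add_smul (M : Rep K Q0 Q1 s t d) (N : Rep K Q0 Q1 s t c)
    (E : ∀ a : Q1, Matrix (Fin (c (t a))) (Fin (c (s a))) K) (r : K) :
    extMap K Q0 Q1 s t M (fun a => N a + r • E a) =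
      extMap K Q0 Q1 s t M N - r • arrowMul E := by
  ext f a : 2
  simp [extMap, arrowMul, Matrix.add_mul, sub_sub]

theorem one_mem_repHom (M : Rep K Q0 Q1 s t d) : 1 ∈ RepHom K Q0 Q1 s t M M := by
  intro a
  simp

theorem IsBrick.exists_eq_smul_one {M : Rep K Q0 Q1 s t d}
    (hM : IsBrick K Q0 Q1 s t M) {f : ∀ i : Q0, Matrix (Fin (d i)) (Fin (d i)) K}
    (hf : f ∈ RepHom K Q0 Q1 s t M M) : ∃ μ : K, f = μ • 1 := by
  have hone : (⟨1, one_mem_repHom M⟩ : RepHom K Q0 Q1 s t M M) ≠ 0 := by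
    intro h
    have : Subsingleton (∀ i : Q0, Matrix (Fin (d i)) (Fin (d i)) K) :=
      subsingleton_of_zero_eq_one (congrArg Subtype.val h).symm
    simp [IsBrick, Module.finrank_zero_of_subsingleton] at hM
  obtain ⟨μ, hμ⟩ := (finrank_eq_one_iff_of_nonzero' _ hone).1 hM ⟨f, hf⟩
  exact ⟨μ, congrArg Subtype.val hμ.symm⟩

theorem IsBrick.pencilInjective {B : Rep K Q0 Q1 s t d}
    {E : ∀ a : Q1, Matrix (Fin (d (t a))) (Fin (d (s a))) K} (hB : IsBrick K Q0 Q1 s t B)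
    (hE : E ∉ LinearMap.range (extMap K Q0 Q1 s t B B)) :
    (extMap K Q0 Q1 s t B B).PencilInjective (arrowMul E) := by
  intro f h0 hs
  have hstep (k : ℕ) (hk : extMap K Q0 Q1 s t B B (f k) = 0) : f k = 0 := by
    obtain ⟨μ, hμ⟩ := hB.exists_eq_smul_one ((repHom_eq_ker_extMap B B).ge hk)
    rcases eq_or_ne μ 0 with rfl | hμ0
    · simpa using hμ
    · refine absurd ⟨μ⁻¹ • f (k + 1), ?_⟩ hE
      rw [map_smul, hs k, hμ, map_smul, arrowMul_one, smul_smul, inv_mul_cancel₀ hμ0, one_smul]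
  have hzero (k : ℕ) : f k = 0 := by
    induction k with
    | zero => exact hstep 0 h0
    | succ k ih => exact hstep (k + 1) (by rw [hs k, ih, map_zero])
  exact funext hzero

theorem exists_repHom_eq_bot_of_not_surjective_extMap [Infinite K] [Fintype Q0] [Fintype Q1]
    {B : Rep K Q0 Q1 s t d} (hB : IsBrick K Q0 Q1 s t B)
    (hext : ¬ Function.Surjective (extMap K Q0 Q1 s t B B)) :
    ∃ X : Rep K Q0 Q1 s t d, RepHom K Q0 Q1 s t B X = ⊥ := by
  obtain ⟨E, hE⟩ : ∃ E, E ∉ LinearMap.range (extMap K Q0 Q1 s t B B) := by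
    simpa [Function.Surjective] using hext
  obtain ⟨r, hr⟩ := (hB.pencilInjective hE).exists_sub_smul_injective
  rw [← extMap_add_smul] at hr
  exact ⟨_, (repHom_eq_ker_extMap _ _).trans (LinearMap.ker_eq_bot.2 hr)⟩

end RepScheme

theorem RepScheme.exists_right_perp_module_multiple_dim_general
    (K : Type) [Field K] [IsAlgClosed K]
    (Q0 Q1 : Type) [Fintype Q0] [Fintype Q1] (s t : Q1 → Q0)
    (d : Q0 → ℕ) (B : Rep K Q0 Q1 s t d)
    (hbrick : IsBrick K Q0 Q1 s t B)
    (hnotexc : ¬ Function.Surjective (extMap K Q0 Q1 s t B B)) :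
    ∃ (l : ℕ), 1 ≤ l ∧ ∃ X : Rep K Q0 Q1 s t (fun i => l * d i),
      RepHom K Q0 Q1 s t B X = ⊥ := by
  suffices ∀ e, e = d → ∃ X : Rep K Q0 Q1 s t e, RepHom K Q0 Q1 s t B X = ⊥ from
    ⟨1, le_rfl, this _ (funext fun i => one_mul (d i))⟩
  rintro e rfl
  exact exists_repHom_eq_bot_of_not_surjective_extMap hbrick hnotexc

/-- **Proposition 3.15 (2).** Let `Λ = KQ` with `Q` a finite acyclic quiver. If `B` is a
non-exceptional brick, then there exists `X ∈ B⊥` (i.e. `Hom_Λ(B,X) = 0`) whose dimension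
vector is a positive integer multiple of `dim B`. -/
theorem RepScheme.exists_right_perp_module_multiple_dim
    (K : Type) [Field K] [IsAlgClosed K]
    (Q0 Q1 : Type) [Fintype Q0] [Fintype Q1] (s t : Q1 → Q0)
    (hacyc : IsAcyclic Q0 Q1 s t)
    (d : Q0 → ℕ) (B : Rep K Q0 Q1 s t d)
    (hbrick : IsBrick K Q0 Q1 s t B)
    (hnotexc : ¬ Function.Surjective (extMap K Q0 Q1 s t B B)) :
    ∃ (l : ℕ), 1 ≤ l ∧ ∃ X : Rep K Q0 Q1 s t (fun i => l * d i),
      RepHom K Q0 Q1 s t B X = ⊥ :=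
  RepScheme.exists_right_perp_module_multiple_dim_general K Q0 Q1 s t d B hbrick hnotexc
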